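/- Let q be a nonzero complex number that is not a root of unity, with a fixed square root q^{1/2}, and let α : ℤ → ℂ have finite support. Define F(L) := Σ_{a ∈ ℤ} α(a) T_0(L, a; q) for nonnegative integers L. Then for every nonnegative integer L, Σ_{i≥0} q^{i²/2} [L choose i]_q F(i) = Σ_{a ∈ ℤ} α(a) q^{a²/2} [2L choose L-a]_q. -/
import Mathlib


/-- The finite q-Pochhammer symbol `(a;q)_n`. -/
noncomputable def qPoch (a q : ℂ) (n : ℕ) : ℂ :=
  ∏ j ∈ Finset.range n, (1 - a * q ^ j)

/-- The infinite q-Pochhammer symbol `(a;q)_∞`. -/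
noncomputable def qPochInf (a q : ℂ) : ℂ :=
  ∏' j : ℕ, (1 - a * q ^ j)

/-- `1/(q;q)_n` for an integer `n`, with the convention that it is `0` for `n < 0`. -/
noncomputable def qPochInvZ (q : ℂ) (n : ℤ) : ℂ :=
  if 0 ≤ n then (qPoch q q n.toNat)⁻¹ else 0

/-- The q-trinomial coefficient `(L, b; a; q)_2`. -/
noncomputable def qTrinomial (L : ℕ) (b a : ℤ) (q : ℂ) : ℂ :=
  ∑' n : ℕ, q ^ ((n : ℤ) * ((n : ℤ) + b)) * qPoch q q L * qPochInvZ q (n : ℤ) *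
    qPochInvZ q ((n : ℤ) + a) * qPochInvZ q ((L : ℤ) - 2 * (n : ℤ) - a)

/-- The q-trinomial coefficient `T_n(L, a; q)`, where `s` is a fixed square root of `q`. -/
noncomputable def qTriT (n : ℤ) (L : ℕ) (a : ℤ) (q s : ℂ) : ℂ :=
  s ^ ((L : ℤ) * ((L : ℤ) - n) - a * (a - n)) * qTrinomial L (a - n) a q⁻¹

/-- The Gaussian (q-binomial) coefficient `[N choose k]_q`, zero unless `0 ≤ k ≤ N`. -/
noncomputable def qBinom (N k : ℤ) (q : ℂ) : ℂ :=
  if 0 ≤ k ∧ k ≤ N then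
    qPoch q q N.toNat * (qPoch q q k.toNat)⁻¹ * (qPoch q q (N - k).toNat)⁻¹
  else 0

/-- The quadratic form `Q(m,n) = 2m² + 6mn + 6n²` from Capparelli's theorems. -/
def Qcap (m n : ℕ) : ℕ := 2 * m ^ 2 + 6 * m * n + 6 * n ^ 2

open Finset

lemma qPoch_zero (a q : ℂ) : qPoch a q 0 = 1 := by simp [qPoch]

lemma qPoch_succ (q : ℂ) (n : ℕ) : qPoch q q (n + 1) = qPoch q q n * (1 - q ^ (n + 1)) := by
  rw [qPoch, Finset.prod_range_succ, ← qPoch]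
  ring

lemma qPoch_ne_zero {q : ℂ} (hroot : ∀ k : ℕ, 0 < k → q ^ k ≠ 1) (n : ℕ) :
    qPoch q q n ≠ 0 := by
  induction n with
  | zero => simp [qPoch_zero]
  | succ m ih =>
    rw [qPoch_succ]
    exact mul_ne_zero ih (sub_ne_zero.mpr (Ne.symm (hroot (m + 1) (by omega))))

lemma s_ne_zero {q s : ℂ} (hs : s ^ 2 = q) (hq : q ≠ 0) : s ≠ 0 := by
  intro h; apply hq; rw [← hs, h]; ring

lemma qPoch_inv_mul {q s : ℂ} (hs : s ^ 2 = q) (hq : q ≠ 0) (n : ℕ) :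
    qPoch q⁻¹ q⁻¹ n * s ^ (n * (n + 1)) = (-1) ^ n * qPoch q q n := by
  induction n with
  | zero => simp [qPoch_zero]
  | succ m ih =>
    have hsucc : qPoch q⁻¹ q⁻¹ (m + 1) = qPoch q⁻¹ q⁻¹ m * (1 - q⁻¹ ^ (m + 1)) := by
      rw [qPoch, Finset.prod_range_succ, ← qPoch]; ring
    have hexp : (m + 1) * (m + 2) = m * (m + 1) + 2 * (m + 1) := by ring
    have hs2 : s ^ (2 * (m + 1)) = q ^ (m + 1) := by rw [pow_mul, hs]
    have hkey : (1 - q⁻¹ ^ (m + 1)) * q ^ (m + 1) = -(1 - q ^ (m + 1)) := by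
      have : q⁻¹ ^ (m + 1) * q ^ (m + 1) = 1 := by
        rw [← mul_pow, inv_mul_cancel₀ hq, one_pow]
      rw [sub_mul, one_mul, this]; ring
    calc qPoch q⁻¹ q⁻¹ (m + 1) * s ^ ((m + 1) * (m + 1 + 1))
        = (qPoch q⁻¹ q⁻¹ m * s ^ (m * (m + 1))) * ((1 - q⁻¹ ^ (m + 1)) * s ^ (2 * (m + 1))) := by
          rw [hsucc]; rw [show (m + 1) * (m + 1 + 1) = m * (m + 1) + 2 * (m + 1) by ring, pow_add]
          ring
      _ = ((-1) ^ m * qPoch q q m) * ((1 - q⁻¹ ^ (m + 1)) * q ^ (m + 1)) := by rw [ih, hs2]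
      _ = ((-1) ^ m * qPoch q q m) * (-(1 - q ^ (m + 1))) := by rw [hkey]
      _ = (-1) ^ (m + 1) * qPoch q q (m + 1) := by rw [qPoch_succ]; ring

lemma qPochInv_ne_zero {q s : ℂ} (hs : s ^ 2 = q) (hq : q ≠ 0)
    (hroot : ∀ k : ℕ, 0 < k → q ^ k ≠ 1) (n : ℕ) : qPoch q⁻¹ q⁻¹ n ≠ 0 := by
  intro h
  have := qPoch_inv_mul hs hq n
  rw [h, zero_mul] at this
  have h1 : ((-1 : ℂ)) ^ n * qPoch q q n ≠ 0 :=
    mul_ne_zero (pow_ne_zero _ (by norm_num)) (qPoch_ne_zero hroot n)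
  exact h1 this.symm

lemma qPoch_inv_eq {q s : ℂ} (hs : s ^ 2 = q) (hq : q ≠ 0) (n : ℕ) :
    qPoch q⁻¹ q⁻¹ n = (-1) ^ n * qPoch q q n * (s ^ (n * (n + 1)))⁻¹ := by
  have hs0 := s_ne_zero hs hq
  rw [← qPoch_inv_mul hs hq n, mul_inv_cancel_right₀ (pow_ne_zero _ hs0)]


lemma quad_inv {q s : ℂ} (hs : s ^ 2 = q) (hq : q ≠ 0) (x y z : ℕ) (w : ℂ) :
    w * qPoch q⁻¹ q⁻¹ (x + y + z) * (qPoch q⁻¹ q⁻¹ x)⁻¹ * (qPoch q⁻¹ q⁻¹ y)⁻¹ *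
      (qPoch q⁻¹ q⁻¹ z)⁻¹
    = w * qPoch q q (x + y + z) * (qPoch q q x)⁻¹ * (qPoch q q y)⁻¹ * (qPoch q q z)⁻¹ *
        (s ^ (2 * (x * y + x * z + y * z)))⁻¹ := by
  have hs0 : s ≠ 0 := s_ne_zero hs hq
  rw [qPoch_inv_eq hs hq (x + y + z), qPoch_inv_eq hs hq x, qPoch_inv_eq hs hq y,
    qPoch_inv_eq hs hq z]
  have hneg : ((-1 : ℂ))⁻¹ = -1 := by norm_num
  simp only [mul_inv, inv_inv, ← inv_pow, hneg]
  have hsgn : ((-1 : ℂ)) ^ (x + y + z) * (-1) ^ x * (-1) ^ y * (-1) ^ z = 1 := by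
    rw [← pow_add, ← pow_add, ← pow_add, show x + y + z + x + y + z = 2 * (x + y + z) by ring,
      pow_mul, neg_one_sq, one_pow]
  have hspow : (s ^ ((x + y + z) * (x + y + z + 1)))⁻¹ *
      (s ^ (x * (x + 1)) * s ^ (y * (y + 1)) * s ^ (z * (z + 1))) =
      (s ^ (2 * (x * y + x * z + y * z)))⁻¹ := by
    rw [show (x + y + z) * (x + y + z + 1)
        = x * (x + 1) + y * (y + 1) + z * (z + 1) + 2 * (x * y + x * z + y * z) by ring,
      ← pow_add, ← pow_add,
      pow_add s (x * (x + 1) + y * (y + 1) + z * (z + 1)) (2 * (x * y + x * z + y * z)),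
      mul_inv, mul_right_comm, inv_mul_cancel₀ (pow_ne_zero _ hs0), one_mul]
  have hspow2 : s⁻¹ ^ ((x + y + z) * (x + y + z + 1)) *
      (s ^ (x * (x + 1)) * s ^ (y * (y + 1)) * s ^ (z * (z + 1))) =
      s⁻¹ ^ (2 * (x * y + x * z + y * z)) := by
    rw [inv_pow, inv_pow]; exact hspow
  calc w * ((-1) ^ (x + y + z) * qPoch q q (x + y + z) * s⁻¹ ^ ((x + y + z) * (x + y + z + 1))) *
          ((-1) ^ x * (qPoch q q x)⁻¹ * s ^ (x * (x + 1))) *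
        ((-1) ^ y * (qPoch q q y)⁻¹ * s ^ (y * (y + 1))) *
      ((-1) ^ z * (qPoch q q z)⁻¹ * s ^ (z * (z + 1)))
      = ((-1) ^ (x + y + z) * (-1) ^ x * (-1) ^ y * (-1) ^ z) *
          (s⁻¹ ^ ((x + y + z) * (x + y + z + 1)) *
            (s ^ (x * (x + 1)) * s ^ (y * (y + 1)) * s ^ (z * (z + 1)))) *
          (w * qPoch q q (x + y + z) * (qPoch q q x)⁻¹ * (qPoch q q y)⁻¹ * (qPoch q q z)⁻¹) := by
        ring
    _ = _ := by rw [hsgn, hspow2]; ring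


lemma qBinom_out {q : ℂ} {N k : ℤ} (h : ¬ (0 ≤ k ∧ k ≤ N)) : qBinom N k q = 0 := if_neg h

lemma qBinom_nat (q : ℂ) (N k : ℕ) (h : k ≤ N) :
    qBinom (N : ℤ) (k : ℤ) q =
      qPoch q q N * (qPoch q q k)⁻¹ * (qPoch q q (N - k))⁻¹ := by
  have h1 : ((N : ℤ)).toNat = N := by omega
  have h2 : ((k : ℤ)).toNat = k := by omega
  have h3 : ((N : ℤ) - (k : ℤ)).toNat = N - k := by omega
  rw [qBinom, if_pos (by omega), h1, h2, h3]

lemma qBinom_symm (q : ℂ) (N : ℕ) (k : ℤ) : qBinom (N : ℤ) k q = qBinom (N : ℤ) ((N : ℤ) - k) q := by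
  by_cases h : 0 ≤ k ∧ k ≤ (N : ℤ)
  · rw [qBinom, if_pos h, qBinom, if_pos (by omega)]
    rw [show (N : ℤ) - ((N : ℤ) - k) = k by ring]
    ring
  · rw [qBinom_out h, qBinom_out (by omega)]

lemma qBinom_nat_self (q : ℂ) (hroot : ∀ k : ℕ, 0 < k → q ^ k ≠ 1) (N : ℕ) :
    qBinom (N : ℤ) (N : ℤ) q = 1 := by
  rw [qBinom_nat q N N le_rfl, Nat.sub_self, qPoch_zero, inv_one, mul_one,
    mul_inv_cancel₀ (qPoch_ne_zero hroot N)]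

lemma qBinom_nat_zero (q : ℂ) (hroot : ∀ k : ℕ, 0 < k → q ^ k ≠ 1) (N : ℕ) :
    qBinom (N : ℤ) (0 : ℤ) q = 1 := by
  rw [show (0:ℤ) = ((0:ℕ):ℤ) by simp, qBinom_nat q N 0 (by omega), Nat.sub_zero, qPoch_zero,
    inv_one, mul_one, mul_inv_cancel₀ (qPoch_ne_zero hroot N)]

lemma qBinom_pascal {q : ℂ} (hq : q ≠ 0) (hroot : ∀ k : ℕ, 0 < k → q ^ k ≠ 1) (n : ℕ) (k : ℤ) :
    qBinom ((n : ℤ) + 1) k q = q ^ k * qBinom (n : ℤ) k q + qBinom (n : ℤ) (k - 1) q := by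
  rcases lt_trichotomy k 0 with hk | hk | hk
  · rw [qBinom_out (by omega), qBinom_out (by omega), qBinom_out (by omega)]; ring
  · subst hk
    rw [show ((n : ℤ) + 1) = ((n + 1 : ℕ) : ℤ) by push_cast; ring,
      qBinom_nat_zero q hroot (n + 1), qBinom_nat_zero q hroot n, qBinom_out (by omega)]
    simp
  · rcases lt_trichotomy k ((n : ℤ) + 1) with hk2 | hk2 | hk2
    · -- 1 ≤ k ≤ n
      obtain ⟨j, rfl⟩ : ∃ j : ℕ, k = (j : ℤ) := ⟨k.toNat, by omega⟩
      have hj1 : 1 ≤ j := by omega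
      have hjn : j ≤ n := by omega
      rw [show ((n : ℤ) + 1) = ((n + 1 : ℕ) : ℤ) by push_cast; ring,
        qBinom_nat q (n + 1) j (by omega), qBinom_nat q n j hjn,
        show ((j : ℤ) - 1) = ((j - 1 : ℕ) : ℤ) by omega,
        qBinom_nat q n (j - 1) (by omega), zpow_natCast]
      have e1 : qPoch q q (n + 1) = qPoch q q n * (1 - q ^ (n + 1)) := qPoch_succ q n
      have e2 : qPoch q q (n + 1 - j) = qPoch q q (n - j) * (1 - q ^ (n + 1 - j)) := by
        rw [show n + 1 - j = (n - j) + 1 by omega, qPoch_succ]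
        try rw [show n - j + 1 = n + 1 - j by omega]
      have e3 : qPoch q q j = qPoch q q (j - 1) * (1 - q ^ j) := by
        conv_lhs => rw [show j = (j - 1) + 1 by omega]
        rw [qPoch_succ, show j - 1 + 1 = j by omega]
      have e4 : qPoch q q (n - (j - 1)) = qPoch q q (n - j) * (1 - q ^ (n + 1 - j)) := by
        rw [show n - (j - 1) = (n - j) + 1 by omega, qPoch_succ]
        try rw [show n - j + 1 = n + 1 - j by omega]
      have hpow : q ^ j * q ^ (n + 1 - j) = q ^ (n + 1) := by
        rw [← pow_add]; congr 1; omega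
      have h1 : (1 - q ^ j) ≠ 0 := sub_ne_zero.mpr (Ne.symm (hroot j (by omega)))
      have h2 : (1 - q ^ (n + 1 - j)) ≠ 0 := sub_ne_zero.mpr (Ne.symm (hroot _ (by omega)))
      have hA := qPoch_ne_zero hroot n
      have hB := qPoch_ne_zero hroot (j - 1)
      have hC := qPoch_ne_zero hroot (n - j)
      rw [e1, e2, e3, e4, ← hpow]
      field_simp
      ring
    · -- k = n + 1
      obtain rfl : k = ((n + 1 : ℕ) : ℤ) := by omega
      rw [show ((n : ℤ) + 1) = ((n + 1 : ℕ) : ℤ) by push_cast; ring,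
        qBinom_nat_self q hroot (n + 1),
        qBinom_out (show ¬((0:ℤ) ≤ ((n + 1 : ℕ) : ℤ) ∧ ((n + 1 : ℕ) : ℤ) ≤ (n : ℤ)) by omega),
        show ((n + 1 : ℕ) : ℤ) - 1 = ((n : ℕ) : ℤ) by push_cast; ring,
        qBinom_nat_self q hroot n]
      ring
    · rw [qBinom_out (by omega), qBinom_out (by omega), qBinom_out (by omega)]; ring

lemma qVdM {q : ℂ} (hq : q ≠ 0) (hroot : ∀ k : ℕ, 0 < k → q ^ k ≠ 1) (M N : ℕ) (r : ℤ) :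
    qBinom ((M : ℤ) + N) r q =
      ∑ d ∈ range (M + 1),
        q ^ (((M : ℤ) - d) * (r - d)) * qBinom (M : ℤ) (d : ℤ) q * qBinom (N : ℤ) (r - d) q := by
  induction M generalizing r with
  | zero =>
    simp only [Nat.cast_zero, zero_add, range_one, sum_singleton, Nat.cast_zero]
    have h0 : qBinom 0 0 q = 1 := by simpa using qBinom_nat_zero q hroot 0
    rw [h0]
    simp
  | succ M ih =>
    have hL : ((M + 1 : ℕ) : ℤ) + N = ((M + N : ℕ) : ℤ) + 1 := by push_cast; ring
    have expand : ∀ d ∈ range (M + 1 + 1),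
        q ^ ((((M + 1 : ℕ) : ℤ) - d) * (r - d)) * qBinom ((M + 1 : ℕ) : ℤ) (d : ℤ) q *
          qBinom (N : ℤ) (r - d) q =
        q ^ (((M : ℤ) + 1 - d) * (r - d)) * (q ^ (d : ℤ) * qBinom (M : ℤ) (d : ℤ) q) *
            qBinom (N : ℤ) (r - d) q +
          q ^ (((M : ℤ) + 1 - d) * (r - d)) * qBinom (M : ℤ) ((d : ℤ) - 1) q *
            qBinom (N : ℤ) (r - d) q := by
      intro d _
      rw [show ((M + 1 : ℕ) : ℤ) = (M : ℤ) + 1 by push_cast; ring, qBinom_pascal hq hroot M d]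
      ring
    have S1eq : ∑ d ∈ range (M + 1 + 1),
        q ^ (((M : ℤ) + 1 - d) * (r - d)) * (q ^ (d : ℤ) * qBinom (M : ℤ) (d : ℤ) q) *
          qBinom (N : ℤ) (r - d) q
        = q ^ r * ∑ d ∈ range (M + 1),
            q ^ (((M : ℤ) - d) * (r - d)) * qBinom (M : ℤ) (d : ℤ) q * qBinom (N : ℤ) (r - d) q := by
      rw [Finset.sum_range_succ,
        qBinom_out (show ¬((0:ℤ) ≤ ((M + 1 : ℕ) : ℤ) ∧ ((M + 1 : ℕ) : ℤ) ≤ (M : ℤ)) by omega),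
        Finset.mul_sum]
      simp only [mul_zero, zero_mul, add_zero]
      refine Finset.sum_congr rfl fun d hd => ?_
      have h1 : q ^ (((M : ℤ) + 1 - d) * (r - d)) * q ^ (d : ℤ)
          = q ^ r * q ^ (((M : ℤ) - d) * (r - d)) := by
        rw [← zpow_add₀ hq, ← zpow_add₀ hq]
        congr 1
        ring
      calc q ^ (((M : ℤ) + 1 - d) * (r - d)) * (q ^ (d : ℤ) * qBinom (M : ℤ) (d : ℤ) q) *
            qBinom (N : ℤ) (r - d) q
          = (q ^ (((M : ℤ) + 1 - d) * (r - d)) * q ^ (d : ℤ)) * qBinom (M : ℤ) (d : ℤ) q *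
            qBinom (N : ℤ) (r - d) q := by ring
        _ = _ := by rw [h1]; ring
    have S2eq : ∑ d ∈ range (M + 1 + 1),
        q ^ (((M : ℤ) + 1 - d) * (r - d)) * qBinom (M : ℤ) ((d : ℤ) - 1) q *
          qBinom (N : ℤ) (r - d) q
        = ∑ d ∈ range (M + 1),
            q ^ (((M : ℤ) - d) * (r - 1 - d)) * qBinom (M : ℤ) (d : ℤ) q *
              qBinom (N : ℤ) (r - 1 - d) q := by
      rw [Finset.sum_range_succ',
        qBinom_out (show ¬((0:ℤ) ≤ ((0 : ℕ) : ℤ) - 1 ∧ ((0 : ℕ) : ℤ) - 1 ≤ (M : ℤ)) by omega)]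
      simp only [mul_zero, zero_mul, add_zero]
      refine Finset.sum_congr rfl fun d hd => ?_
      push_cast
      rw [show (M : ℤ) + 1 - ((d : ℤ) + 1) = (M : ℤ) - d by ring,
        show r - ((d : ℤ) + 1) = r - 1 - d by ring,
        show (d : ℤ) + 1 - 1 = (d : ℤ) by ring]
    rw [hL, qBinom_pascal hq hroot (M + N) r,
      show ((M + N : ℕ) : ℤ) = (M : ℤ) + N by push_cast; ring, ih r, ih (r - 1),
      Finset.sum_congr rfl expand, Finset.sum_add_distrib, S1eq, S2eq]

lemma qV2 {q : ℂ} (hq : q ≠ 0) (hroot : ∀ k : ℕ, 0 < k → q ^ k ≠ 1) (a k L : ℕ) (hk : k ≤ L) :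
    qBinom (L : ℤ) ((k : ℤ) + a) q =
      ∑ n ∈ range (k + 1), q ^ ((n : ℤ) * ((n : ℤ) + a)) * qBinom (k : ℤ) (n : ℤ) q *
        qBinom ((L - k : ℕ) : ℤ) ((n : ℤ) + a) q := by
  have h := qVdM hq hroot k (L - k) ((k : ℤ) + a)
  rw [show (k : ℤ) + ((L - k : ℕ) : ℤ) = (L : ℤ) by omega] at h
  rw [h, ← Finset.sum_range_reflect]
  refine Finset.sum_congr rfl fun n hn => ?_
  have hn' : n ≤ k := by simpa [Nat.lt_succ_iff] using hn
  have c1 : ((k + 1 - 1 - n : ℕ) : ℤ) = (k : ℤ) - n := by omega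
  rw [c1, show (k : ℤ) - ((k : ℤ) - n) = (n : ℤ) by ring,
    show (k : ℤ) + a - ((k : ℤ) - n) = (n : ℤ) + a by ring, ← qBinom_symm q k (n : ℤ)]

lemma qV3 {q : ℂ} (hq : q ≠ 0) (hroot : ∀ k : ℕ, 0 < k → q ^ k ≠ 1) (a L : ℕ) :
    qBinom (2 * (L : ℤ)) ((L : ℤ) - a) q =
      ∑ k ∈ range (L + 1), q ^ ((k : ℤ) * ((k : ℤ) + a)) * qBinom (L : ℤ) (k : ℤ) q *
        qBinom (L : ℤ) ((k : ℤ) + a) q := by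
  by_cases ha : a ≤ L
  · have h := qVdM hq hroot L L ((L : ℤ) - a)
    rw [show (L : ℤ) + (L : ℤ) = 2 * (L : ℤ) by ring] at h
    rw [h]
    have step1 : ∑ d ∈ range (L + 1),
        q ^ (((L : ℤ) - d) * ((L : ℤ) - a - d)) * qBinom (L : ℤ) (d : ℤ) q *
          qBinom (L : ℤ) ((L : ℤ) - a - d) q
        = ∑ d ∈ range (L - a + 1),
        q ^ (((L : ℤ) - d) * ((L : ℤ) - a - d)) * qBinom (L : ℤ) (d : ℤ) q *
          qBinom (L : ℤ) ((L : ℤ) - a - d) q := by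
      refine (Finset.sum_subset (by apply Finset.range_subset_range.mpr; omega) ?_).symm
      intro d _ hd
      rw [qBinom_out (show ¬((0:ℤ) ≤ (L : ℤ) - a - d ∧ (L : ℤ) - a - d ≤ (L : ℤ)) by
        simp only [Finset.mem_range] at hd; omega)]
      ring
    rw [step1, ← Finset.sum_range_reflect]
    have step2 : ∑ k ∈ range (L - a + 1),
        q ^ (((L : ℤ) - (L - a + 1 - 1 - k : ℕ)) * ((L : ℤ) - a - (L - a + 1 - 1 - k : ℕ))) *
          qBinom (L : ℤ) ((L - a + 1 - 1 - k : ℕ) : ℤ) q *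
          qBinom (L : ℤ) ((L : ℤ) - a - (L - a + 1 - 1 - k : ℕ)) q
        = ∑ k ∈ range (L - a + 1),
        q ^ ((k : ℤ) * ((k : ℤ) + a)) * qBinom (L : ℤ) (k : ℤ) q *
          qBinom (L : ℤ) ((k : ℤ) + a) q := by
      refine Finset.sum_congr rfl fun k hk => ?_
      have hk' : k ≤ L - a := by simpa [Nat.lt_succ_iff] using hk
      have c1 : ((L - a + 1 - 1 - k : ℕ) : ℤ) = (L : ℤ) - a - k := by omega
      rw [c1, show (L : ℤ) - ((L : ℤ) - a - k) = (k : ℤ) + a by ring,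
        show (L : ℤ) - a - ((L : ℤ) - a - k) = (k : ℤ) by ring,
        show (L : ℤ) - a - k = (L : ℤ) - ((k : ℤ) + a) by ring,
        ← qBinom_symm q L ((k : ℤ) + a),
        show ((k : ℤ) + a) * k = (k : ℤ) * ((k : ℤ) + a) by ring]
      ring
    rw [step2]
    refine Finset.sum_subset (by apply Finset.range_subset_range.mpr; omega) ?_
    intro k _ hk
    have hk2 : L - a + 1 ≤ k := by
      by_contra hc
      exact hk (Finset.mem_range.mpr (by omega))
    rw [qBinom_out (show ¬((0:ℤ) ≤ (k : ℤ) + a ∧ (k : ℤ) + a ≤ (L : ℤ)) by omega)]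
    ring
  · rw [qBinom_out (show ¬((0:ℤ) ≤ (L : ℤ) - a ∧ (L : ℤ) - a ≤ 2 * (L : ℤ)) by omega)]
    refine (Finset.sum_eq_zero fun k hk => ?_).symm
    rw [qBinom_out (show ¬((0:ℤ) ≤ (k : ℤ) + a ∧ (k : ℤ) + a ≤ (L : ℤ)) by omega)]
    ring


lemma qPochInvZ_neg (q : ℂ) {n : ℤ} (h : n < 0) : qPochInvZ q n = 0 := by
  rw [qPochInvZ, if_neg (by omega)]

lemma qPochInvZ_nonneg (q : ℂ) {n : ℤ} (h : 0 ≤ n) : qPochInvZ q n = (qPoch q q n.toNat)⁻¹ := by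
  rw [qPochInvZ, if_pos h]

lemma qPochInvZ_natCast (q : ℂ) (n : ℕ) : qPochInvZ q (n : ℤ) = (qPoch q q n)⁻¹ := by
  rw [qPochInvZ_nonneg q (by omega)]
  norm_num

lemma qTrinomial_term_vanish (q : ℂ) (L : ℕ) (b a : ℤ) {n : ℕ} (hn : L < n) :
    q ^ ((n : ℤ) * ((n : ℤ) + b)) * qPoch q q L * qPochInvZ q (n : ℤ) *
      qPochInvZ q ((n : ℤ) + a) * qPochInvZ q ((L : ℤ) - 2 * (n : ℤ) - a) = 0 := by
  by_cases h : (n : ℤ) + a < 0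
  · rw [qPochInvZ_neg q h]
    ring
  · rw [qPochInvZ_neg q (show (L : ℤ) - 2 * n - a < 0 by omega)]
    ring

lemma qTrinomial_eq_sum (q : ℂ) (L : ℕ) (b a : ℤ) :
    qTrinomial L b a q = ∑ n ∈ range (L + 1),
      q ^ ((n : ℤ) * ((n : ℤ) + b)) * qPoch q q L * qPochInvZ q (n : ℤ) *
        qPochInvZ q ((n : ℤ) + a) * qPochInvZ q ((L : ℤ) - 2 * (n : ℤ) - a) := by
  refine tsum_eq_sum fun n hn => ?_
  exact qTrinomial_term_vanish q L b a (by simpa [Nat.lt_succ_iff] using hn)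

lemma sum_range_shift (f : ℕ → ℂ) (c N : ℕ) (h0 : ∀ i < c, f i = 0)
    (h1 : ∀ k, N < k + c → f (k + c) = 0) :
    ∑ i ∈ range (N + 1), f i = ∑ k ∈ range (N + 1), f (k + c) := by
  have e1 : ∑ i ∈ range (N + 1 + c), f i = ∑ i ∈ range (N + 1), f i := by
    rw [Finset.sum_range_add]
    have hz : ∑ x ∈ range c, f (N + 1 + x) = 0 := by
      refine Finset.sum_eq_zero fun x _ => ?_
      rcases lt_or_ge (N + 1 + x) c with h | h
      · exact h0 _ h
      · rw [show N + 1 + x = (N + 1 + x - c) + c by omega]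
        exact h1 _ (by omega)
    rw [hz, add_zero]
  have e2 : ∑ i ∈ range (c + (N + 1)), f i = ∑ k ∈ range (N + 1), f (k + c) := by
    rw [Finset.sum_range_add]
    have hz : ∑ x ∈ range c, f x = 0 := Finset.sum_eq_zero fun x hx => h0 x (mem_range.mp hx)
    rw [hz, zero_add]
    exact Finset.sum_congr rfl fun k _ => by rw [add_comm]
  rw [← e1, show N + 1 + c = c + (N + 1) by omega, e2]

lemma qTrinomial_symm (q : ℂ) (i : ℕ) (b : ℕ) :
    qTrinomial i (-(b : ℤ)) (-(b : ℤ)) q = qTrinomial i (b : ℤ) (b : ℤ) q := by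
  rw [qTrinomial_eq_sum, qTrinomial_eq_sum]
  rw [sum_range_shift
    (fun n => q ^ ((n : ℤ) * ((n : ℤ) + -(b:ℤ))) * qPoch q q i * qPochInvZ q (n : ℤ) *
      qPochInvZ q ((n : ℤ) + -(b:ℤ)) * qPochInvZ q ((i : ℤ) - 2 * (n : ℤ) - -(b:ℤ))) b i
    (fun n hn => by
      beta_reduce
      rw [qPochInvZ_neg q (show (n : ℤ) + -(b:ℤ) < 0 by omega)]; ring)
    (fun k hk => by
      beta_reduce
      rw [qPochInvZ_neg q (show (i : ℤ) - 2 * ((k + b : ℕ) : ℤ) - -(b:ℤ) < 0 by push_cast; omega)]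
      ring)]
  refine Finset.sum_congr rfl fun n hn => ?_
  have c1 : ((n + b : ℕ) : ℤ) = (n : ℤ) + b := by push_cast; ring
  rw [c1, show (n : ℤ) + b + -(b : ℤ) = (n : ℤ) by ring,
    show ((n : ℤ) + b) * (n : ℤ) = (n : ℤ) * ((n : ℤ) + b) by ring,
    show (i : ℤ) - 2 * ((n : ℤ) + b) - -(b:ℤ) = (i : ℤ) - 2 * n - b by ring]
  ring


set_option maxHeartbeats 4000000 in
lemma key_pointwise {q s : ℂ} (hs : s ^ 2 = q) (hq : q ≠ 0)
    (hroot : ∀ k : ℕ, 0 < k → q ^ k ≠ 1) (a L n k : ℕ) (hk : k ≤ L) :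
    s ^ ((k + n + a) ^ 2) * qBinom (L : ℤ) ((k + n + a : ℕ) : ℤ) q *
      (s ^ (((k + n + a : ℕ) : ℤ) * ((k + n + a : ℕ) : ℤ) - (a : ℤ) * (a : ℤ)) *
        (q⁻¹ ^ ((n : ℤ) * ((n : ℤ) + (a : ℤ))) * qPoch q⁻¹ q⁻¹ (k + n + a) *
          qPochInvZ q⁻¹ (n : ℤ) * qPochInvZ q⁻¹ ((n : ℤ) + (a : ℤ)) *
          qPochInvZ q⁻¹ (((k + n + a : ℕ) : ℤ) - 2 * (n : ℤ) - (a : ℤ)))) =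
    s ^ (a ^ 2) * (q ^ ((k : ℤ) * ((k : ℤ) + (a : ℤ))) * qBinom (L : ℤ) (k : ℤ) q *
      (q ^ ((n : ℤ) * ((n : ℤ) + (a : ℤ))) * qBinom (k : ℤ) (n : ℤ) q *
        qBinom ((L - k : ℕ) : ℤ) ((n : ℤ) + (a : ℤ)) q)) := by
  have hs0 : s ≠ 0 := s_ne_zero hs hq
  rcases lt_or_ge k n with hnk | hnk
  · -- n > k : both sides vanish
    rw [qPochInvZ_neg q⁻¹ (show ((k + n + a : ℕ) : ℤ) - 2 * (n : ℤ) - (a : ℤ) < 0 by push_cast; omega),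
      qBinom_out (show ¬((0:ℤ) ≤ (n : ℤ) ∧ (n : ℤ) ≤ (k : ℤ)) by omega)]
    ring
  · obtain ⟨c, rfl⟩ : ∃ c, k = n + c := ⟨k - n, by omega⟩
    rcases lt_or_ge L (n + c + n + a) with hkL | hkL
    · -- i > L : both sides vanish
      rw [qBinom_out (show ¬((0:ℤ) ≤ ((n + c + n + a : ℕ) : ℤ) ∧ ((n + c + n + a : ℕ) : ℤ) ≤ (L : ℤ)) by push_cast; omega),
        qBinom_out (show ¬((0:ℤ) ≤ (n : ℤ) + (a : ℤ) ∧ (n : ℤ) + (a : ℤ) ≤ ((L - (n + c) : ℕ) : ℤ)) by omega)]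
      ring
    · -- main case
      obtain ⟨d, rfl⟩ : ∃ d, L = n + c + n + a + d := ⟨L - (n + c + n + a), by omega⟩
      -- identify integer arguments as nat casts
      rw [show ((n + c + n + a : ℕ) : ℤ) - 2 * (n : ℤ) - (a : ℤ) = ((c : ℕ) : ℤ) by push_cast; ring,
        show (n : ℤ) + (a : ℤ) = ((n + a : ℕ) : ℤ) by push_cast; ring]
      rw [qPochInvZ_natCast, qPochInvZ_natCast, qPochInvZ_natCast]
      -- binomials
      rw [qBinom_nat q (n + c + n + a + d) (n + c + n + a) (by omega),
        qBinom_nat q (n + c + n + a + d) (n + c) (by omega),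
        qBinom_nat q (n + c) n (by omega),
        qBinom_nat q (n + c + n + a + d - (n + c)) (n + a) (by omega)]
      -- nat subtraction cleanup
      rw [show n + c + n + a + d - (n + c + n + a) = d by omega,
        show n + c + n + a + d - (n + c) = n + a + d by omega,
        show n + c - n = c by omega,
        show n + a + d - (n + a) = d by omega]
      -- q-powers to s-powers
      rw [show ((n + c + n + a : ℕ) : ℤ) * ((n + c + n + a : ℕ) : ℤ) - (a : ℤ) * (a : ℤ)
          = (((n + c + n + a) * (n + c + n + a) : ℕ) : ℤ) - ((a * a : ℕ) : ℤ) by push_cast; ring,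
        zpow_sub₀ hs0, zpow_natCast, zpow_natCast,
        show (n : ℤ) * ((n + a : ℕ) : ℤ) = ((n * (n + a) : ℕ) : ℤ) by push_cast; ring,
        show ((n + c : ℕ) : ℤ) * (((n + c : ℕ) : ℤ) + (a : ℤ)) = (((n + c) * (n + c + a) : ℕ) : ℤ) by push_cast; ring,
        zpow_natCast, zpow_natCast, zpow_natCast]
      -- q⁻¹ powers
      rw [inv_pow]
      -- Pochhammer inversion via quad_inv
      rw [show n + c + n + a = n + (n + a) + c by ring]
      rw [quad_inv hs hq n (n + a) c]
      -- replace q by s^2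
      rw [← hs]
      have hP : ∀ m : ℕ, qPoch (s ^ 2) (s ^ 2) m ≠ 0 := by rw [hs]; exact qPoch_ne_zero hroot
      ring_nf
      have h1 := hP (n * 2 + a + c + d)
      have h2 := hP (n * 2 + a + c)
      have h3 := hP d
      have h4 := hP n
      have h5 := hP (n + a)
      have h6 := hP c
      have h7 := hP (n + c)
      have h8 := hP (n + a + d)
      have hpair : ∀ e : ℕ, s ^ e * s⁻¹ ^ e = 1 := fun e => by
        rw [inv_pow, mul_inv_cancel₀ (pow_ne_zero _ hs0)]
      rw [mul_inv_cancel_right₀ h2, mul_inv_cancel_right₀ h7, mul_inv_cancel_right₀ h8]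
      have hS : s ^ (n*a*8) * s ^ (n*c*8) * s ^ (n^2*8) * s ^ (a*c*4) * s ^ (a^2*2) * s ^ (c^2*2) *
          (s⁻¹ ^ (n*a*4) * s⁻¹ ^ (n*c*4) * s⁻¹ ^ (n^2*4) * s⁻¹ ^ (a*c*2) * s⁻¹ ^ (a^2))
          = s ^ (n*a*4) * s ^ (n*c*4) * s ^ (n^2*4) * s ^ (a*c*2) * s ^ (a^2) * s ^ (c^2*2) := by
        trans ((s^(n*a*4) * s⁻¹^(n*a*4)) * (s^(n*c*4) * s⁻¹^(n*c*4)) * (s^(n^2*4) * s⁻¹^(n^2*4)) *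
          (s^(a*c*2) * s⁻¹^(a*c*2)) * (s^(a^2) * s⁻¹^(a^2)) *
          (s^(n*a*4) * s^(n*c*4) * s^(n^2*4) * s^(a*c*2) * s^(a^2) * s^(c^2*2)))
        · ring
        · rw [hpair, hpair, hpair, hpair, hpair]; ring
      trans ((s ^ (n*a*8) * s ^ (n*c*8) * s ^ (n^2*8) * s ^ (a*c*4) * s ^ (a^2*2) * s ^ (c^2*2) *
          (s⁻¹ ^ (n*a*4) * s⁻¹ ^ (n*c*4) * s⁻¹ ^ (n^2*4) * s⁻¹ ^ (a*c*2) * s⁻¹ ^ (a^2))) *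
          (qPoch (s ^ 2) (s ^ 2) (n * 2 + a + c + d) * (qPoch (s ^ 2) (s ^ 2) d)⁻¹ *
            (qPoch (s ^ 2) (s ^ 2) n)⁻¹ * (qPoch (s ^ 2) (s ^ 2) (n + a))⁻¹ *
            (qPoch (s ^ 2) (s ^ 2) c)⁻¹))
      · ring
      rw [hS]
      ring


lemma key_nat {q s : ℂ} (hs : s ^ 2 = q) (hq : q ≠ 0)
    (hroot : ∀ k : ℕ, 0 < k → q ^ k ≠ 1) (a L : ℕ) :
    ∑ i ∈ range (L + 1), s ^ (i ^ 2) * qBinom (L : ℤ) (i : ℤ) q * qTriT 0 i (a : ℤ) q s =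
      s ^ (a ^ 2) * qBinom (2 * (L : ℤ)) ((L : ℤ) - (a : ℤ)) q := by
  set F : ℕ → ℕ → ℂ := fun i n =>
    s ^ (i ^ 2) * qBinom (L : ℤ) (i : ℤ) q *
      (s ^ ((i : ℤ) * (i : ℤ) - (a : ℤ) * (a : ℤ)) *
        (q⁻¹ ^ ((n : ℤ) * ((n : ℤ) + (a : ℤ))) * qPoch q⁻¹ q⁻¹ i *
          qPochInvZ q⁻¹ (n : ℤ) * qPochInvZ q⁻¹ ((n : ℤ) + (a : ℤ)) *
          qPochInvZ q⁻¹ ((i : ℤ) - 2 * (n : ℤ) - (a : ℤ)))) with hF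
  set G : ℕ → ℕ → ℂ := fun k n =>
    s ^ (a ^ 2) * (q ^ ((k : ℤ) * ((k : ℤ) + (a : ℤ))) * qBinom (L : ℤ) (k : ℤ) q *
      (q ^ ((n : ℤ) * ((n : ℤ) + (a : ℤ))) * qBinom (k : ℤ) (n : ℤ) q *
        qBinom ((L - k : ℕ) : ℤ) ((n : ℤ) + (a : ℤ)) q)) with hG
  have step1 : ∀ i ∈ range (L + 1),
      s ^ (i ^ 2) * qBinom (L : ℤ) (i : ℤ) q * qTriT 0 i (a : ℤ) q s =
      ∑ n ∈ range (L + 1), F i n := by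
    intro i hi
    have hiL : i ≤ L := by simpa [Nat.lt_succ_iff] using hi
    rw [qTriT, show (a : ℤ) - 0 = (a : ℤ) by ring, show (i : ℤ) - 0 = (i : ℤ) by ring,
      qTrinomial_eq_sum q⁻¹ i (a : ℤ) (a : ℤ), Finset.mul_sum, Finset.mul_sum]
    refine Finset.sum_subset (Finset.range_subset_range.mpr (by omega)) fun n _ hn => ?_
    have hn' : i < n := by
      by_contra hc
      exact hn (Finset.mem_range.mpr (by omega))
    rw [qPochInvZ_neg q⁻¹ (show (i : ℤ) - 2 * (n : ℤ) - (a : ℤ) < 0 by omega)]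
    ring
  rw [Finset.sum_congr rfl step1, Finset.sum_comm]
  have step2 : ∀ n ∈ range (L + 1),
      ∑ i ∈ range (L + 1), F i n = ∑ k ∈ range (L + 1), G k n := by
    intro n hn
    rw [sum_range_shift (fun i => F i n) (n + a) L
      (fun i hi => by
        simp only [hF]
        rw [qPochInvZ_neg q⁻¹ (show (i : ℤ) - 2 * (n : ℤ) - (a : ℤ) < 0 by omega)]
        ring)
      (fun k hk => by
        simp only [hF]
        rw [qBinom_out (show ¬((0:ℤ) ≤ ((k + (n + a) : ℕ) : ℤ) ∧ ((k + (n + a) : ℕ) : ℤ) ≤ (L : ℤ))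
          by push_cast; omega)]
        ring)]
    refine Finset.sum_congr rfl fun k hk => ?_
    have hkL : k ≤ L := by simpa [Nat.lt_succ_iff] using hk
    rw [show k + (n + a) = k + n + a by ring]
    exact key_pointwise hs hq hroot a L n k hkL
  rw [Finset.sum_congr rfl step2, Finset.sum_comm]
  have step3 : ∀ k ∈ range (L + 1),
      ∑ n ∈ range (L + 1), G k n =
      s ^ (a ^ 2) * (q ^ ((k : ℤ) * ((k : ℤ) + (a : ℤ))) * qBinom (L : ℤ) (k : ℤ) q *
        qBinom (L : ℤ) ((k : ℤ) + (a : ℤ)) q) := by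
    intro k hk
    have hkL : k ≤ L := by simpa [Nat.lt_succ_iff] using hk
    have hres : ∑ n ∈ range (L + 1), G k n = ∑ n ∈ range (k + 1), G k n := by
      refine (Finset.sum_subset (Finset.range_subset_range.mpr (by omega)) fun n _ hn => ?_).symm
      have hn' : k < n := by
        by_contra hc
        exact hn (Finset.mem_range.mpr (by omega))
      simp only [hG]
      rw [qBinom_out (show ¬((0:ℤ) ≤ (n : ℤ) ∧ (n : ℤ) ≤ (k : ℤ)) by omega)]
      ring
    rw [hres, hG]
    simp only
    rw [← Finset.mul_sum, ← Finset.mul_sum, ← qV2 hq hroot a k L hkL]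
  rw [Finset.sum_congr rfl step3, ← Finset.mul_sum, qV3 hq hroot a L]


lemma key_int {q s : ℂ} (hs : s ^ 2 = q) (hq : q ≠ 0)
    (hroot : ∀ k : ℕ, 0 < k → q ^ k ≠ 1) (a : ℤ) (L : ℕ) :
    ∑ i ∈ range (L + 1), s ^ (i ^ 2) * qBinom (L : ℤ) (i : ℤ) q * qTriT 0 i a q s =
      s ^ (a ^ 2) * qBinom (2 * (L : ℤ)) ((L : ℤ) - a) q := by
  rcases le_or_gt 0 a with ha | ha
  · obtain ⟨b, rfl⟩ : ∃ b : ℕ, a = (b : ℤ) := ⟨a.toNat, by omega⟩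
    rw [show ((b : ℤ)) ^ 2 = ((b ^ 2 : ℕ) : ℤ) by push_cast; ring, zpow_natCast]
    exact key_nat hs hq hroot b L
  · obtain ⟨b, rfl⟩ : ∃ b : ℕ, a = -(b : ℤ) := ⟨(-a).toNat, by omega⟩
    have hT : ∀ i : ℕ, qTriT 0 i (-(b : ℤ)) q s = qTriT 0 i (b : ℤ) q s := by
      intro i
      rw [qTriT, qTriT, show -(b : ℤ) - 0 = -(b : ℤ) by ring, show (b : ℤ) - 0 = (b : ℤ) by ring,
        qTrinomial_symm q⁻¹ i b,
        show -(b : ℤ) * -(b : ℤ) = (b : ℤ) * (b : ℤ) by ring]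
    have hB : qBinom (2 * (L : ℤ)) ((L : ℤ) - -(b : ℤ)) q
        = qBinom (2 * (L : ℤ)) ((L : ℤ) - (b : ℤ)) q := by
      rw [show (2 * (L : ℤ)) = ((2 * L : ℕ) : ℤ) by push_cast; ring,
        qBinom_symm q (2 * L) ((L : ℤ) - -(b : ℤ)),
        show ((2 * L : ℕ) : ℤ) - ((L : ℤ) - -(b : ℤ)) = (L : ℤ) - (b : ℤ) by push_cast; ring]
    rw [hB, show (-(b : ℤ)) ^ 2 = ((b ^ 2 : ℕ) : ℤ) by push_cast; ring, zpow_natCast,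
      Finset.sum_congr rfl fun i _ => by rw [hT i]]
    exact key_nat hs hq hroot b L

theorem bailey_type_T0 (q s : ℂ) (hs : s ^ 2 = q) (hq : q ≠ 0) (hroot : ∀ k : ℕ, 0 < k → q ^ k ≠ 1)
    (α : ℤ → ℂ) (hα : (Function.support α).Finite)
    (F : ℕ → ℂ) (hF : ∀ L : ℕ, F L = ∑ᶠ a : ℤ, α a * qTriT 0 L a q s) (L : ℕ) :
    (∑' i : ℕ, s ^ (i ^ 2) * qBinom (L : ℤ) (i : ℤ) q * F i) =
    ∑ᶠ a : ℤ, α a * s ^ (a ^ 2) * qBinom (2 * (L : ℤ)) ((L : ℤ) - a) q := by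
  classical
  set A : Finset ℤ := hα.toFinset with hA
  have hmem : ∀ a : ℤ, α a ≠ 0 → a ∈ A := fun a h => by
    rw [hA, Set.Finite.mem_toFinset]; exact h
  have h1 : (∑' i : ℕ, s ^ (i ^ 2) * qBinom (L : ℤ) (i : ℤ) q * F i) =
      ∑ i ∈ range (L + 1), s ^ (i ^ 2) * qBinom (L : ℤ) (i : ℤ) q * F i := by
    refine tsum_eq_sum fun i hi => ?_
    have : L < i := by
      by_contra hc
      exact hi (Finset.mem_range.mpr (by omega))
    rw [qBinom_out (show ¬((0:ℤ) ≤ (i : ℤ) ∧ (i : ℤ) ≤ (L : ℤ)) by omega)]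
    ring
  have h2 : ∀ i : ℕ, F i = ∑ a ∈ A, α a * qTriT 0 i a q s := by
    intro i
    rw [hF i]
    refine finsum_eq_finset_sum_of_support_subset _ fun a ha => ?_
    have : α a ≠ 0 := by
      intro h0
      simp only [Function.mem_support] at ha
      exact ha (by rw [h0]; ring)
    exact hmem a this
  have h3 : ∑ᶠ a : ℤ, α a * s ^ (a ^ 2) * qBinom (2 * (L : ℤ)) ((L : ℤ) - a) q =
      ∑ a ∈ A, α a * s ^ (a ^ 2) * qBinom (2 * (L : ℤ)) ((L : ℤ) - a) q := by
    refine finsum_eq_finset_sum_of_support_subset _ fun a ha => ?_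
    have : α a ≠ 0 := by
      intro h0
      simp only [Function.mem_support] at ha
      exact ha (by rw [h0]; ring)
    exact hmem a this
  rw [h1, h3]
  calc ∑ i ∈ range (L + 1), s ^ (i ^ 2) * qBinom (L : ℤ) (i : ℤ) q * F i
      = ∑ i ∈ range (L + 1), ∑ a ∈ A,
          α a * (s ^ (i ^ 2) * qBinom (L : ℤ) (i : ℤ) q * qTriT 0 i a q s) := by
        refine Finset.sum_congr rfl fun i _ => ?_
        rw [h2 i, Finset.mul_sum]
        exact Finset.sum_congr rfl fun a _ => by ring
    _ = ∑ a ∈ A, α a * ∑ i ∈ range (L + 1),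
          s ^ (i ^ 2) * qBinom (L : ℤ) (i : ℤ) q * qTriT 0 i a q s := by
        rw [Finset.sum_comm]
        exact Finset.sum_congr rfl fun a _ => by rw [Finset.mul_sum]
    _ = ∑ a ∈ A, α a * s ^ (a ^ 2) * qBinom (2 * (L : ℤ)) ((L : ℤ) - a) q := by
        refine Finset.sum_congr rfl fun a _ => ?_
        rw [key_int hs hq hroot a L]
        ring
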